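/- Let 𝕜 be a field of characteristic ≠ 2 and V a 2m-dimensional 𝕜-vector space with a nondegenerate symmetric bilinear form ⟨·,·⟩. Let V_• and V'_• be two complete totally isotropic flags in V, extended to complete self-dual flags. Then there exists a linear automorphism g of V with ⟨g x, g y⟩ = ⟨x, y⟩ for all x, y ∈ V, det g = 1, and g(V_i) = V'_i for all 1 ≤ i ≤ 2m, if and only if dim(V_m ∩ V'_m) ≡ m (mod 2). -/

import Mathlib

/-!
Any two complete self-dual flags are carried onto each other by an isometry, obtained by
matching hyperbolic bases adapted to the two flags; so the question is only which determinant
such an isometry `g` has. Since `g` maps the Lagrangian `L = V_m` onto `L' = V'_m`, and an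
isometry preserving a Lagrangian `L` has determinant `1` (it acts on `V/L ≅ L^*` by the inverse
transpose of its action on `L`), `det g` depends only on the pair `(L, L')`. It is computed by
induction on `m - dim (L ∩ L')`: for `x ∈ L`, `y ∈ L'` with `⟨x, y⟩ = 1`, the reflection in the
anisotropic vector `x - y` swaps `x` and `y`, has determinant `-1`, and moves `L` to a
Lagrangian meeting `L'` in `(L ∩ L') ⊕ k y`. Hence `det g = (-1) ^ (m - dim (L ∩ L'))`.
-/

/-- `F 1 ⊂ ⋯ ⊂ F (2m) = V` is a complete self-dual flag extending a complete
totally isotropic flag: `dim F i = i` for `1 ≤ i ≤ m`, the form vanishes on `F m`,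
and `F (2m−j) = (F j)^⊥` for `0 ≤ j ≤ m−1` (with `F 0 = ⊥`). -/
def IsSelfDualFlag {k V : Type*} [Field k] [AddCommGroup V] [Module k V]
    (m : ℕ) (B : LinearMap.BilinForm k V) (F : ℕ → Submodule k V) : Prop :=
  F 0 = ⊥ ∧
  (∀ i, 1 ≤ i → i ≤ m → Module.finrank k (F i) = i) ∧
  (∀ i, i < m → F i ≤ F (i + 1)) ∧
  (∀ x ∈ F m, ∀ y ∈ F m, B x y = 0) ∧
  (∀ j, j ≤ m - 1 → F (2 * m - j) = B.orthogonal (F j))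

open Module Submodule

section Isometry

variable {k V : Type*} [Field k] [AddCommGroup V] [Module k V]

lemma LinearMap.IsOrthogonal.comp {B : LinearMap.BilinForm k V} {f g : V → V}
    (hf : B.IsOrthogonal f) (hg : B.IsOrthogonal g) : B.IsOrthogonal (f ∘ g) :=
  fun x y => (hf _ _).trans (hg x y)

lemma LinearMap.IsOrthogonal.symm {B : LinearMap.BilinForm k V} {g : V ≃ₗ[k] V}
    (hg : B.IsOrthogonal g) : B.IsOrthogonal g.symm :=
  fun x y => by rw [← hg, LinearEquiv.apply_symm_apply, LinearEquiv.apply_symm_apply]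

lemma Module.det_reflection [FiniteDimensional k V] {x : V} {f : Dual k V} (h : f x = 2) :
    LinearMap.det (reflection h : V →ₗ[k] V) = -1 := by
  rcases eq_or_ne x 0 with rfl | hx
  · have h2 : (2 : k) = 0 := by simpa using h.symm
    have hid : (reflection h : V →ₗ[k] V) = LinearMap.id := by
      ext v
      simp [Module.reflection_apply]
    rw [hid, LinearMap.det_id]
    linear_combination h2
  · have hW : span k {x} ≤ (span k {x}).comap (reflection h : V →ₗ[k] V) :=
      mem_invtSubmodule_reflection_of_mem h _ (mem_span_singleton_self x)
    have hres : LinearMap.restrict (p := span k {x}) (q := span k {x}) _ hW =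
        (-1 : k) • LinearMap.id := by
      ext ⟨v, hv⟩
      obtain ⟨c, rfl⟩ := mem_span_singleton.mp hv
      simp
    have hquot : (span k {x}).mapQ _ (reflection h : V →ₗ[k] V) hW = LinearMap.id := by
      ext v
      simp only [LinearMap.comp_apply, LinearMap.id_comp, mkQ_apply, mapQ_apply]
      rw [Submodule.Quotient.eq, LinearEquiv.coe_coe, Module.reflection_apply,
        sub_sub_cancel_left]
      exact neg_mem (smul_mem _ _ (mem_span_singleton_self x))
    rw [LinearMap.det_eq_det_mul_det _ _ hW, hres, hquot, LinearMap.det_smul, LinearMap.det_id,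
      finrank_span_singleton hx]
    simp

lemma LinearMap.BilinForm.isOrthogonal_reflection {B : LinearMap.BilinForm k V}
    (hsymm : ∀ x y, B x y = B y x) {x : V} {c : k} (h : (c • B.flip x) x = 2) :
    B.IsOrthogonal (reflection h) := by
  intro u v
  have hc : c * B x x = 2 := by simpa using h
  simp only [Module.reflection_apply, LinearMap.smul_apply, LinearMap.BilinForm.flip_apply,
    smul_eq_mul, map_sub, map_smul, LinearMap.sub_apply, hsymm x v]
  linear_combination (c * B u x * B v x) * hc

lemma LinearMap.BilinForm.exists_isOrthogonal_reflection_sub [FiniteDimensional k V]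
    {B : LinearMap.BilinForm k V} (hsymm : ∀ x y, B x y = B y x) {x y : V}
    (hx : B x x = 0) (hy : B y y = 0) (hxy : B x y = 1) :
    ∃ h : V ≃ₗ[k] V, B.IsOrthogonal h ∧ LinearMap.det (h : V →ₗ[k] V) = -1 ∧
      ∀ u, h u = u + B u (x - y) • (x - y) := by
  have hr : ((-1 : k) • B.flip (x - y)) (x - y) = 2 := by
    simp only [LinearMap.smul_apply, flip_apply, map_sub, LinearMap.sub_apply, hx, hy, hxy,
      hsymm y x, smul_eq_mul]
    ring
  refine ⟨reflection hr, isOrthogonal_reflection hsymm hr, det_reflection hr, fun u => ?_⟩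
  rw [Module.reflection_apply, LinearMap.smul_apply, flip_apply, neg_one_smul, neg_smul,
    sub_neg_eq_add]

end Isometry

namespace LinearMap.BilinForm

variable {k V : Type*} [Field k] [AddCommGroup V] [Module k V] {B : LinearMap.BilinForm k V}

def IsLagrangian (B : LinearMap.BilinForm k V) (L : Submodule k V) : Prop :=
  B.orthogonal L = L

lemma orthogonal_map_of_isOrthogonal {g : V ≃ₗ[k] V} (hg : B.IsOrthogonal g)
    (W : Submodule k V) :
    B.orthogonal (W.map (g : V →ₗ[k] V)) = (B.orthogonal W).map (g : V →ₗ[k] V) := by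
  ext y
  rw [Submodule.mem_map_equiv]
  simp only [mem_orthogonal_iff, Submodule.mem_map, LinearEquiv.coe_coe, forall_exists_index,
    and_imp, forall_apply_eq_imp_iff₂]
  refine forall₂_congr fun x _ => ?_
  rw [← hg x (g.symm y), LinearEquiv.apply_symm_apply]

lemma ker_flip_domRestrict (W : Submodule k V) :
    ker (B.domRestrict W).flip = B.orthogonal W := by
  ext v
  simp [LinearMap.ext_iff, mem_orthogonal_iff]

lemma isOrthogonal_basis_equiv {ι : Type*} {e e' : Basis ι k V}
    (h : ∀ i j, B (e' i) (e' j) = B (e i) (e j)) :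
    B.IsOrthogonal (e.equiv e' (Equiv.refl ι)) := by
  have hcomp : B.comp (e.equiv e' (.refl ι) : V →ₗ[k] V) (e.equiv e' (.refl ι)) = B :=
    ext_basis e fun i j => by simp [Basis.equiv_apply, h]
  exact fun x y => congr($hcomp x y)

namespace IsLagrangian

variable {L L' : Submodule k V}

lemma isotropic (hL : B.IsLagrangian L) {x y : V} (hx : x ∈ L) (hy : y ∈ L) : B x y = 0 := by
  rw [← hL] at hy
  exact mem_orthogonal_iff.mp hy x hx

lemma map (hL : B.IsLagrangian L) {g : V ≃ₗ[k] V} (hg : B.IsOrthogonal g) :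
    B.IsLagrangian (L.map (g : V →ₗ[k] V)) := by
  rw [IsLagrangian, orthogonal_map_of_isOrthogonal hg, hL]

lemma exists_apply_eq_one (hL : B.IsLagrangian L) (hL'L : ¬ L' ≤ L) :
    ∃ x ∈ L, ∃ y ∈ L', B x y = 1 := by
  obtain ⟨y, hyL', hyL⟩ := SetLike.not_le_iff_exists.mp hL'L
  rw [← hL, mem_orthogonal_iff] at hyL
  push Not at hyL
  obtain ⟨x, hxL, hxy⟩ := hyL
  exact ⟨x, hxL, (B x y)⁻¹ • y, smul_mem _ _ hyL',
    by rw [map_smul, smul_eq_mul, inv_mul_cancel₀ hxy]⟩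

lemma map_inf_eq_sup_span (hL : B.IsLagrangian L) (hL' : B.IsLagrangian L') {x y : V}
    (hx : x ∈ L) (hy : y ∈ L') (hxy : B x y = 1) {h : V ≃ₗ[k] V}
    (hh : ∀ u, h u = u + B u (x - y) • (x - y)) :
    L.map (h : V →ₗ[k] V) ⊓ L' = (L ⊓ L') ⊔ span k {y} := by
  apply le_antisymm
  · rintro _ ⟨⟨u, hu, rfl⟩, huL'⟩
    have hdecomp : h u = (u - B u y • x) + B u y • y := by
      rw [hh, map_sub, hL.isotropic hu hx]
      module
    rw [LinearEquiv.coe_coe, hdecomp]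
    refine add_mem (mem_sup_left ⟨sub_mem hu (smul_mem _ _ hx), ?_⟩)
      (mem_sup_right (smul_mem _ _ (mem_span_singleton_self y)))
    rw [SetLike.mem_coe, LinearEquiv.coe_coe, hdecomp] at huL'
    simpa using sub_mem huL' (smul_mem _ (B u y) hy)
  · refine sup_le (fun w ⟨hwL, hwL'⟩ => ⟨⟨w, hwL, ?_⟩, hwL'⟩) ?_
    · rw [LinearEquiv.coe_coe, hh, map_sub, hL.isotropic hwL hx, hL'.isotropic hwL' hy]
      simp
    · rw [span_le, Set.singleton_subset_iff]
      refine ⟨⟨x, hx, ?_⟩, hy⟩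
      rw [LinearEquiv.coe_coe, hh, map_sub, hL.isotropic hx hx, hxy]
      module

end IsLagrangian

variable [FiniteDimensional k V]

lemma surjective_flip_domRestrict (hnd : B.Nondegenerate) (W : Submodule k V) :
    Function.Surjective (B.domRestrict W).flip := by
  rw [← LinearMap.range_eq_top]
  apply Submodule.eq_top_of_finrank_eq
  have := (B.domRestrict W).flip.finrank_range_add_finrank_ker
  rw [ker_flip_domRestrict, finrank_orthogonal hnd] at this
  rw [Subspace.dual_finrank_eq]
  have := Submodule.finrank_le W
  omega

lemma exists_dual_family (hnd : B.Nondegenerate) {ι : Type*} [Fintype ι] [DecidableEq ι]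
    {b : ι → V} (hb : LinearIndependent k b) :
    ∃ c : ι → V, ∀ i j, B (b i) (c j) = if i = j then 1 else 0 := by
  let bW := Basis.span hb
  choose c hc using fun j => surjective_flip_domRestrict hnd _ (bW.dualBasis j)
  refine ⟨c, fun i j => ?_⟩
  have := LinearMap.congr_fun (hc j) (bW i)
  rw [Basis.dualBasis_apply_self] at this
  simpa [bW, eq_comm] using this

lemma exists_basis_hyperbolic (hsymm : ∀ x y, B x y = B y x) (h2 : (2 : k) ≠ 0)
    (hnd : B.Nondegenerate) {m : ℕ} (hdim : finrank k V = 2 * m) {b : Fin m → V}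
    (hb : LinearIndependent k b) (hiso : ∀ i j, B (b i) (b j) = 0) :
    ∃ e : Basis (Fin m ⊕ Fin m) k V, (∀ i, e (.inl i) = b i) ∧
      ∀ i j, B (e i) (e j) = if i.swap = j then 1 else 0 := by
  obtain ⟨c, hc⟩ := exists_dual_family hnd hb
  -- subtracting `½ ∑ᵢ ⟨cᵢ, cⱼ⟩ bᵢ` makes the `c'ⱼ` isotropic without changing their pairing with `b`
  let c' : Fin m → V := fun j => c j - (2 : k)⁻¹ • ∑ i, B (c i) (c j) • b i
  have h12 : ∀ i j, B (b i) (c' j) = if i = j then 1 else 0 := by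
    intro i j
    simp [c', map_sum, hiso, hc]
  have h22 : ∀ i j, B (c' i) (c' j) = 0 := by
    intro i j
    simp only [c', map_sub, map_smul, map_sum, LinearMap.sub_apply, LinearMap.smul_apply,
      LinearMap.coe_sum, Finset.sum_apply, smul_eq_mul, hsymm (c _) (b _), hc, hiso, mul_ite,
      mul_one, mul_zero, Finset.sum_ite_eq', Finset.mem_univ, if_true, Finset.sum_const_zero,
      sub_zero]
    rw [hsymm (c j) (c i)]
    field_simp
    ring
  let v : Fin m ⊕ Fin m → V := Sum.elim b c'
  have hv : ∀ i j, B (v i) (v j) = if i.swap = j then 1 else 0 := by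
    rintro (i | i) (j | j) <;> simp [v, hiso, h12, h22, hsymm (c' i) (b j), eq_comm]
  have hli : LinearIndependent k v := by
    rw [Fintype.linearIndependent_iff]
    intro g hg i
    have := congrArg (fun w => B w (v i.swap)) hg
    simpa [map_sum, hv, Sum.swap_leftInverse.injective.eq_iff, -Fintype.sum_sum_type] using this
  refine ⟨basisOfLinearIndependentOfCardEqFinrank' v hli (by simp [hdim]; ring),
    fun i => by simp [v], fun i j => by simpa using hv i j⟩

lemma isLagrangian_of_isotropic (hnd : B.Nondegenerate) {L : Submodule k V}
    (hiso : ∀ x ∈ L, ∀ y ∈ L, B x y = 0) (hdim : 2 * finrank k L = finrank k V) :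
    B.IsLagrangian L := by
  refine (eq_of_le_of_finrank_le
    (fun y hy => mem_orthogonal_iff.mpr fun x hx => hiso x hx y hy) ?_).symm
  rw [finrank_orthogonal hnd]
  omega

namespace IsLagrangian

variable {L L' : Submodule k V}

lemma two_mul_finrank (hnd : B.Nondegenerate) (hL : B.IsLagrangian L) :
    2 * finrank k L = finrank k V := by
  have := finrank_orthogonal hnd L
  rw [hL] at this
  have := Submodule.finrank_le L
  omega

lemma eq_of_le (hnd : B.Nondegenerate) (hL : B.IsLagrangian L) (hL' : B.IsLagrangian L')
    (h : L ≤ L') : L = L' :=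
  eq_of_le_of_finrank_le h (by linarith [hL.two_mul_finrank hnd, hL'.two_mul_finrank hnd])

lemma det_eq_one (hnd : B.Nondegenerate) (hL : B.IsLagrangian L) {g : V →ₗ[k] V}
    (hg : B.IsOrthogonal g) (hgL : L ≤ L.comap g) : LinearMap.det g = 1 := by
  let Ψ : (V ⧸ L) ≃ₗ[k] Dual k L :=
    (quotEquivOfEq _ _ ((ker_flip_domRestrict L).trans hL).symm).trans
      ((B.domRestrict L).flip.quotKerEquivOfSurjective (surjective_flip_domRestrict hnd L))
  have key : (g.restrict hgL).dualMap ∘ₗ Ψ.toLinearMap ∘ₗ L.mapQ L g hgL = Ψ.toLinearMap := by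
    ext v l
    exact hg l v
  have hΨ : (g.restrict hgL).dualMap ∘ₗ (Ψ.toLinearMap ∘ₗ L.mapQ L g hgL ∘ₗ Ψ.symm.toLinearMap) =
      LinearMap.id := by
    rw [← comp_assoc, ← comp_assoc, comp_assoc _ Ψ.toLinearMap, key, LinearEquiv.comp_symm]
  have := congrArg LinearMap.det hΨ
  rw [det_comp, det_dualMap, det_conj, det_id] at this
  rw [det_eq_det_mul_det L g hgL, this]

lemma exists_isOrthogonal_map_eq (hsymm : ∀ x y, B x y = B y x) (hnd : B.Nondegenerate)
    (hL : B.IsLagrangian L) (hL' : B.IsLagrangian L') {d : ℕ}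
    (hd : finrank k ↥(L ⊓ L') + d = finrank k L) :
    ∃ g : V ≃ₗ[k] V, B.IsOrthogonal g ∧ LinearMap.det (g : V →ₗ[k] V) = (-1) ^ d ∧
      L.map (g : V →ₗ[k] V) = L' := by
  induction d generalizing L with
  | zero =>
    have hLL' : L ⊓ L' = L := eq_of_le_of_finrank_le inf_le_left hd.ge
    refine ⟨LinearEquiv.refl k V, fun _ _ => rfl, by simp, ?_⟩
    simpa using hL.eq_of_le hnd hL' (hLL' ▸ inf_le_right)
  | succ d ih =>
    have hL'L : ¬ L' ≤ L := fun hle => by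
      rw [hL'.eq_of_le hnd hL hle, inf_idem] at hd
      omega
    obtain ⟨x, hx, y, hy, hxy⟩ := hL.exists_apply_eq_one hL'L
    obtain ⟨h, hh, hdet, happ⟩ := exists_isOrthogonal_reflection_sub hsymm
      (hL.isotropic hx hx) (hL'.isotropic hy hy) hxy
    have hyL : y ∉ L ⊓ L' := fun hyL => by simp [hL.isotropic hx hyL.1] at hxy
    obtain ⟨g, hg, hgdet, hgL⟩ := ih (hL.map hh) (by
      rw [map_inf_eq_sup_span hL hL' hx hy hxy happ, finrank_sup_span_singleton hyL,
        LinearEquiv.finrank_map_eq]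
      omega)
    refine ⟨h.trans g, hg.comp hh, ?_, ?_⟩
    · rw [LinearEquiv.coe_trans, LinearMap.det_comp, hgdet, hdet, pow_succ]
    · rw [LinearEquiv.coe_trans, Submodule.map_comp, hgL]

lemma det_eq_neg_one_pow (hsymm : ∀ x y, B x y = B y x) (hnd : B.Nondegenerate)
    (hL : B.IsLagrangian L) (hL' : B.IsLagrangian L') {g : V ≃ₗ[k] V} (hg : B.IsOrthogonal g)
    (hgL : L.map (g : V →ₗ[k] V) = L') :
    LinearMap.det (g : V →ₗ[k] V) = (-1) ^ (finrank k L - finrank k ↥(L ⊓ L')) := by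
  obtain ⟨g₁, hg₁, hdet₁, hg₁L⟩ := exists_isOrthogonal_map_eq hsymm hnd hL hL'
    (Nat.add_sub_cancel' (Submodule.finrank_mono inf_le_left))
  have hfix : L ≤ L.comap ((g₁.symm : V →ₗ[k] V) ∘ₗ g) := fun u hu => by
    have : g u ∈ L.map (g₁ : V →ₗ[k] V) := hg₁L ▸ hgL ▸ mem_map_of_mem hu
    simpa [Submodule.mem_map_equiv] using this
  have hsplit : (g : V →ₗ[k] V) = g₁ ∘ₗ ((g₁.symm : V →ₗ[k] V) ∘ₗ g) := by
    ext u
    simp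
  rw [hsplit, LinearMap.det_comp, hdet₁,
    hL.det_eq_one hnd (fun u v => hg₁.symm.comp hg u v) hfix, mul_one]

end IsLagrangian

end LinearMap.BilinForm

section Flags

variable {k V : Type*} [Field k] [AddCommGroup V] [Module k V] [FiniteDimensional k V]

lemma exists_linearIndependent_span_image_eq {m : ℕ} {F : ℕ → Submodule k V}
    (hmono : ∀ i < m, F i ≤ F (i + 1)) (hrk : ∀ i ≤ m, finrank k (F i) = i) :
    ∃ b : Fin m → V, LinearIndependent k b ∧
      ∀ i ≤ m, F i = span k (b '' {j | (j : ℕ) < i}) := by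
  have hlt : ∀ j : Fin m, F j < F (j + 1) := fun j =>
    lt_of_le_of_finrank_lt_finrank (hmono j j.2) (by rw [hrk _ j.2.le, hrk _ j.2]; omega)
  choose b hbF hbF' using fun j => SetLike.exists_of_lt (hlt j)
  have hspan : ∀ i ≤ m, F i = span k (b '' {j | (j : ℕ) < i}) := by
    intro i
    induction i with
    | zero => intro h; simpa using finrank_eq_zero.mp (hrk 0 h)
    | succ i ih =>
      intro hi
      have hset : {j : Fin m | (j : ℕ) < i + 1} =
          insert (⟨i, hi⟩ : Fin m) {j : Fin m | (j : ℕ) < i} := by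
        ext j
        simp only [Set.mem_ofPred_eq, Set.mem_insert_iff, Fin.ext_iff]
        omega
      rw [hset, Set.image_insert_eq, span_insert, ← ih (Nat.le_of_succ_le hi), sup_comm]
      refine (eq_of_le_of_finrank_le (sup_le (hmono i hi) ((span_singleton_le_iff_mem _ _).mpr
        (hbF ⟨i, hi⟩))) ?_).symm
      rw [finrank_sup_span_singleton (hbF' ⟨i, hi⟩), hrk _ hi, hrk _ (Nat.le_of_succ_le hi)]
  refine ⟨b, ?_, hspan⟩
  rw [linearIndependent_iff_card_eq_finrank_span, Set.finrank, Fintype.card_fin]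
  have : Set.range b = b '' {j | (j : ℕ) < m} := by simp
  rw [this, ← hspan m le_rfl, hrk m le_rfl]

namespace IsSelfDualFlag

open LinearMap.BilinForm

variable {m : ℕ} {B : LinearMap.BilinForm k V} {F F' : ℕ → Submodule k V}

lemma finrank_eq (hF : IsSelfDualFlag m B F) {i : ℕ} (hi : i ≤ m) : finrank k (F i) = i := by
  obtain ⟨h0, hrk, -⟩ := hF
  rcases Nat.eq_zero_or_pos i with rfl | hpos
  · simp [h0]
  · exact hrk i hpos hi

lemma isLagrangian (hF : IsSelfDualFlag m B F) (hnd : B.Nondegenerate)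
    (hdim : finrank k V = 2 * m) : B.IsLagrangian (F m) := by
  have hrk := hF.finrank_eq le_rfl
  obtain ⟨-, -, -, hiso, -⟩ := hF
  exact isLagrangian_of_isotropic hnd hiso (by rw [hrk, hdim])

lemma exists_basis (hF : IsSelfDualFlag m B F) (hsymm : ∀ x y, B x y = B y x)
    (h2 : (2 : k) ≠ 0) (hnd : B.Nondegenerate) (hdim : finrank k V = 2 * m) :
    ∃ e : Basis (Fin m ⊕ Fin m) k V,
      (∀ i ≤ m, F i = span k ((e ∘ Sum.inl) '' {j | (j : ℕ) < i})) ∧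
      ∀ i j, B (e i) (e j) = if i.swap = j then 1 else 0 := by
  have hrk : ∀ i ≤ m, finrank k (F i) = i := fun i => hF.finrank_eq
  obtain ⟨-, -, hmono, hiso, -⟩ := hF
  obtain ⟨b, hb, hspan⟩ := exists_linearIndependent_span_image_eq hmono hrk
  have hbF : ∀ j, b j ∈ F m := fun j => hspan m le_rfl ▸ subset_span ⟨j, j.2, rfl⟩
  obtain ⟨e, he, hgram⟩ := exists_basis_hyperbolic hsymm h2 hnd hdim hb
    fun i j => hiso _ (hbF i) _ (hbF j)
  have heb : e ∘ Sum.inl = b := funext he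
  exact ⟨e, heb ▸ hspan, hgram⟩

lemma exists_isOrthogonal_map_eq (hF : IsSelfDualFlag m B F) (hF' : IsSelfDualFlag m B F')
    (hsymm : ∀ x y, B x y = B y x) (h2 : (2 : k) ≠ 0) (hnd : B.Nondegenerate)
    (hdim : finrank k V = 2 * m) :
    ∃ g : V ≃ₗ[k] V, B.IsOrthogonal g ∧ ∀ i ≤ 2 * m, (F i).map (g : V →ₗ[k] V) = F' i := by
  obtain ⟨e, hspan, hgram⟩ := hF.exists_basis hsymm h2 hnd hdim
  obtain ⟨e', hspan', hgram'⟩ := hF'.exists_basis hsymm h2 hnd hdim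
  set g := e.equiv e' (Equiv.refl _)
  have hg : B.IsOrthogonal g := isOrthogonal_basis_equiv fun i j => by rw [hgram, hgram']
  have hlow : ∀ i ≤ m, (F i).map (g : V →ₗ[k] V) = F' i := fun i hi => by
    rw [hspan i hi, hspan' i hi, map_span, Set.image_image]
    simp [g, Basis.equiv_apply]
  refine ⟨g, hg, fun i hi => ?_⟩
  rcases le_or_gt i m with him | hmi
  · exact hlow i him
  · obtain ⟨-, -, -, -, horth⟩ := hF
    obtain ⟨-, -, -, -, horth'⟩ := hF'
    obtain ⟨j, hj, rfl⟩ : ∃ j ≤ m - 1, i = 2 * m - j := ⟨2 * m - i, by omega, by omega⟩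
    rw [horth j hj, horth' j hj, ← orthogonal_map_of_isOrthogonal hg, hlow j (by omega)]

end IsSelfDualFlag

end Flags

/-- Two complete self-dual flags in a `2m`-dimensional orthogonal space are
conjugate under the special orthogonal group iff `dim (V_m ∩ V'_m) ≡ m (mod 2)`. -/
theorem stmt17 {k : Type*} [Field k] (hchar : ringChar k ≠ 2)
    {V : Type*} [AddCommGroup V] [Module k V] [FiniteDimensional k V]
    (m : ℕ) (hm : 1 ≤ m) (hdim : Module.finrank k V = 2 * m)
    (B : LinearMap.BilinForm k V) (hsymm : ∀ x y, B x y = B y x)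
    (hnd : B.Nondegenerate)
    (F F' : ℕ → Submodule k V)
    (hF : IsSelfDualFlag m B F) (hF' : IsSelfDualFlag m B F') :
    (∃ g : V ≃ₗ[k] V,
        (∀ x y, B (g x) (g y) = B x y) ∧
        LinearMap.det (g : V →ₗ[k] V) = 1 ∧
        ∀ i, 1 ≤ i → i ≤ 2 * m → Submodule.map (g : V →ₗ[k] V) (F i) = F' i) ↔
      Module.finrank k ↥(F m ⊓ F' m) % 2 = m % 2 := by
  have h2 : (2 : k) ≠ 0 := Ring.two_ne_zero hchar
  have hdet : ∀ g : V ≃ₗ[k] V, B.IsOrthogonal g → (F m).map (g : V →ₗ[k] V) = F' m →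
      LinearMap.det (g : V →ₗ[k] V) = (-1) ^ (m - finrank k ↥(F m ⊓ F' m)) := fun g hg hgF => by
    rw [(hF.isLagrangian hnd hdim).det_eq_neg_one_pow hsymm hnd (hF'.isLagrangian hnd hdim) hg hgF,
      hF.finrank_eq le_rfl]
  have hle : finrank k ↥(F m ⊓ F' m) ≤ m :=
    (Submodule.finrank_mono inf_le_left).trans_eq (hF.finrank_eq le_rfl)
  have hneg : (-1 : k) ≠ 1 := fun h => h2 (by linear_combination -h)
  have hparity : (-1 : k) ^ (m - finrank k ↥(F m ⊓ F' m)) = 1 ↔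
      finrank k ↥(F m ⊓ F' m) % 2 = m % 2 := by
    rw [neg_one_pow_eq_one_iff_even hneg, Nat.even_iff]
    omega
  constructor
  · rintro ⟨g, hg, hg1, hgF⟩
    rw [← hparity, ← hdet g hg (hgF m hm (by omega)), hg1]
  · intro hpar
    obtain ⟨g, hg, hgF⟩ := hF.exists_isOrthogonal_map_eq hF' hsymm h2 hnd hdim
    exact ⟨g, hg, (hdet g hg (hgF m (by omega))).trans (hparity.mpr hpar), fun i _ hi => hgF i hi⟩
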